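/- Suppose the channel W has a k-ordered polynomial tail for some k ∈ (0,1), i.e., R_k(M) < ∞ for all M. Then for every M ∈ ℕ and every probability measure p on 𝕏, |I(p,W) − I(p,W_M)| ≤ (2·log e)/(e·(1−k)) · [ M^{1−k}·(R₁(M))^k + R_k(M) ]. -/

import Mathlib

/-!
Write `η(t) = -t log t`. Truncating a pmf `q` at `M` deletes its tail and raises each of the first
`M` masses by `δ = T / M`, where `T` is the tail mass. The elementary bounds
`η(t) ≤ t ^ k / (e (1 - k))` and `|η(a) - η(a + δ)| ≤ δ ^ k / (e (1 - k))` bound the change of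
entropy by `(M (T / M) ^ k + ∑_{i ≥ M} q_i ^ k) / (e (1 - k))
= (M ^ (1 - k) T ^ k + ∑_{i ≥ M} q_i ^ k) / (e (1 - k))`.
The output distribution `pW` and every `W(·|x)` are dominated by `s_i = sup_x W(i|x)`, so this
bound, in terms of `R₁(M)` and `R_k(M)`, holds for `H(pW)` and, after integrating over `x`, for the
conditional entropy. Since `pW_M` is the truncation of `pW`, the two errors add up.
-/

open MeasureTheory

/-- Shannon entropy (base 2) of a pmf on ℕ. -/
noncomputable def pmfEntropy2 (q : ℕ → ℝ) : ℝ :=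
  ∑' i, -(q i * Real.logb 2 (q i))

/-- Mutual information (base 2) of an input distribution `p` and a channel `V` with
countable output alphabet ℕ. -/
noncomputable def mutualInfoCtble {𝕏 : Type*} [MeasurableSpace 𝕏]
    (p : Measure 𝕏) (V : 𝕏 → ℕ → ℝ) : ℝ :=
  pmfEntropy2 (fun i => ∫ x, V x i ∂p) - ∫ x, pmfEntropy2 (V x) ∂p

/-- The `M`-truncated version of a channel `V`. -/
noncomputable def truncChannel {𝕏 : Type*} (V : 𝕏 → ℕ → ℝ) (M : ℕ) (x : 𝕏) (i : ℕ) : ℝ :=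
  if i < M then V x i + (1 / (M : ℝ)) * ∑' j : ℕ, (if M ≤ j then V x j else 0) else 0

/-- The tail quantity `R_k(M) = ∑_{i ≥ M} (sup_x V(i|x))^k`. -/
noncomputable def tailR {𝕏 : Type*} (V : 𝕏 → ℕ → ℝ) (k : ℝ) (M : ℕ) : ℝ :=
  ∑' i : ℕ, if M ≤ i then (⨆ x, V x i) ^ k else 0

namespace Real

lemma log_le_div_exp_one {y : ℝ} (hy : 0 < y) : log y ≤ y / exp 1 := by
  rw [le_div_iff₀ (exp_pos 1), mul_comm]
  simpa [exp_log hy] using exp_one_mul_le_exp (x := log y)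

lemma negMulLog_le_rpow_div {k t : ℝ} (hk : k < 1) (ht : 0 ≤ t) :
    negMulLog t ≤ t ^ k / (exp 1 * (1 - k)) := by
  have hk' : 0 < 1 - k := by linarith
  rcases ht.eq_or_lt with rfl | ht
  · simp only [negMulLog_zero]; positivity
  -- `log y ≤ y / e` at `y = t ^ (k - 1)`
  have h := log_le_div_exp_one (rpow_pos_of_pos ht (k - 1))
  rw [log_rpow ht, rpow_sub_one ht.ne'] at h
  rw [le_div_iff₀ (by positivity), negMulLog]
  have := mul_le_mul_of_nonneg_left h ht.le
  field_simp at this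
  nlinarith

lemma negMulLog_add_le {a b : ℝ} (ha : 0 ≤ a) (hb : 0 ≤ b) :
    negMulLog (a + b) ≤ negMulLog a + negMulLog b := by
  rcases ha.eq_or_lt with rfl | ha
  · simp
  rcases hb.eq_or_lt with rfl | hb
  · simp
  have hla : log a ≤ log (a + b) := log_le_log ha (by linarith)
  have hlb : log b ≤ log (a + b) := log_le_log hb (by linarith)
  simp only [negMulLog]
  nlinarith

lemma negMulLog_sub_negMulLog_add_le {a b : ℝ} (ha : 0 ≤ a) (hb : 0 ≤ b) (hab : a + b ≤ 1) :
    negMulLog a - negMulLog (a + b) ≤ b := by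
  rcases ha.eq_or_lt with rfl | ha
  · rw [zero_add] at hab ⊢
    linarith [negMulLog_nonneg hb hab, negMulLog_zero]
  have hlog : log (a + b) - log a ≤ b / a := by
    rw [← log_div (by linarith) ha.ne']
    calc log ((a + b) / a) ≤ (a + b) / a - 1 := log_le_sub_one_of_pos (by positivity)
      _ = b / a := by rw [add_div, div_self ha.ne', add_sub_cancel_left]
  have h1 : a * (log (a + b) - log a) ≤ b := by
    have := mul_le_mul_of_nonneg_left hlog ha.le
    rwa [mul_div_cancel₀ _ ha.ne'] at this
  have h2 : b * log (a + b) ≤ 0 := mul_nonpos_of_nonneg_of_nonpos hb (log_nonpos (by linarith) hab)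
  simp only [negMulLog]
  nlinarith

lemma min_le_rpow_div {k b : ℝ} (hk0 : 0 < k) (hk1 : k < 1) (hb : 0 ≤ b) :
    min b (exp 1)⁻¹ ≤ b ^ k / (exp 1 * (1 - k)) := by
  have hk' : 0 < 1 - k := by linarith
  have hexp_inv (r : ℝ) : (exp 1)⁻¹ ^ r = exp (-r) := by
    rw [← exp_neg, ← exp_mul]; ring_nf
  rw [le_div_iff₀ (by positivity)]
  rcases le_or_gt b (exp 1)⁻¹ with h | h
  · have hb1 : b ^ (1 - k) ≤ exp (-(1 - k)) := hexp_inv (1 - k) ▸ rpow_le_rpow hb h hk'.le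
    have hek : exp (-(1 - k)) * (exp 1 * (1 - k)) ≤ 1 := by
      calc exp (-(1 - k)) * (exp 1 * (1 - k)) = (1 - k) * exp k := by
            rw [mul_comm (exp 1), mul_left_comm, ← exp_add]; ring_nf
        _ ≤ exp (-k) * exp k := by gcongr; linarith [add_one_le_exp (-k)]
        _ = 1 := by rw [← exp_add]; simp
    calc min b (exp 1)⁻¹ * (exp 1 * (1 - k)) ≤ b ^ k * (b ^ (1 - k) * (exp 1 * (1 - k))) := by
          rw [min_eq_left h, ← mul_assoc (b ^ k), ← rpow_add' hb (by simp)]; simp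
      _ ≤ b ^ k * (exp (-(1 - k)) * (exp 1 * (1 - k))) := by gcongr
      _ ≤ b ^ k := mul_le_of_le_one_right (by positivity) hek
  · have hbk : exp (-k) ≤ b ^ k := hexp_inv k ▸ rpow_le_rpow (by positivity) h.le hk0.le
    rw [min_eq_right h.le, ← mul_assoc, inv_mul_cancel₀ (exp_pos 1).ne', one_mul]
    linarith [add_one_le_exp (-k)]

lemma abs_negMulLog_sub_negMulLog_add_le {k a b : ℝ} (hk0 : 0 < k) (hk1 : k < 1) (ha : 0 ≤ a)
    (hb : 0 ≤ b) (hab : a + b ≤ 1) :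
    |negMulLog a - negMulLog (a + b)| ≤ b ^ k / (exp 1 * (1 - k)) := by
  rw [abs_le]
  constructor
  · linarith [negMulLog_add_le ha hb, negMulLog_le_rpow_div hk1 hb]
  · have hη : negMulLog a - negMulLog (a + b) ≤ (exp 1)⁻¹ := by
      have := negMulLog_le_rpow_div (k := 0) (by norm_num) ha
      simp only [rpow_zero, sub_zero, mul_one, one_div] at this
      linarith [negMulLog_nonneg (by linarith) hab]
    exact (le_min (negMulLog_sub_negMulLog_add_le ha hb hab) hη).trans (min_le_rpow_div hk0 hk1 hb)

end Real

open Real Finset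

lemma tsum_ite_le_eq_tsum_nat_add {α : Type*} [AddCommMonoid α] [TopologicalSpace α]
    (f : ℕ → α) (M : ℕ) : ∑' i, (if M ≤ i then f i else 0) = ∑' i, f (i + M) := by
  rw [← (add_left_injective M).tsum_eq (f := fun i => if M ≤ i then f i else 0)]
  · simp
  · intro i hi
    have : M ≤ i := by by_contra h; simp [h] at hi
    exact ⟨i - M, Nat.sub_add_cancel this⟩

lemma le_one_of_hasSum_one {q : ℕ → ℝ} (hq0 : ∀ i, 0 ≤ q i) (hq : HasSum q 1) (i : ℕ) :
    q i ≤ 1 :=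
  le_hasSum hq i fun j _ => hq0 j

lemma tsum_nat_add_eq_one_sub {q : ℕ → ℝ} (hq : HasSum q 1) (M : ℕ) :
    ∑' i, q (i + M) = 1 - ∑ i ∈ range M, q i :=
  ((hasSum_nat_add_iff' M).2 hq).tsum_eq

lemma pmfEntropy2_eq_mul_tsum (q : ℕ → ℝ) :
    pmfEntropy2 q = logb 2 (exp 1) * ∑' i, negMulLog (q i) := by
  rw [pmfEntropy2, ← tsum_mul_left]
  refine tsum_congr fun i => ?_
  simp only [logb, log_exp, negMulLog]
  ring

noncomputable def truncPmf (q : ℕ → ℝ) (M : ℕ) (i : ℕ) : ℝ :=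
  if i < M then q i + (1 / (M : ℝ)) * ∑' j : ℕ, (if M ≤ j then q j else 0) else 0

lemma truncChannel_apply {𝕏 : Type*} (V : 𝕏 → ℕ → ℝ) (M : ℕ) (x : 𝕏) :
    truncChannel V M x = truncPmf (V x) M := rfl

lemma tsum_negMulLog_truncPmf (q : ℕ → ℝ) (M : ℕ) :
    ∑' i, negMulLog (truncPmf q M i) =
      ∑ i ∈ range M, negMulLog (q i + (∑' j, q (j + M)) / M) := by
  rw [tsum_eq_sum (s := range M) fun i hi => by
    rw [truncPmf, if_neg (by simpa using hi), negMulLog_zero]]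
  refine sum_congr rfl fun i hi => ?_
  rw [truncPmf, if_pos (mem_range.1 hi), tsum_ite_le_eq_tsum_nat_add, one_div_mul_eq_div]

noncomputable def truncErrorBound (k : ℝ) (M : ℕ) (s : ℕ → ℝ) : ℝ :=
  ((M : ℝ) ^ (1 - k) * (∑' i, s (i + M)) ^ k + ∑' i, s (i + M) ^ k) / (exp 1 * (1 - k))

section Summation

variable {k : ℝ} {q s : ℕ → ℝ}

lemma summable_rpow_of_le (hk : 0 ≤ k) (hq0 : ∀ i, 0 ≤ q i) (hqs : ∀ i, q i ≤ s i)
    (hsk : Summable fun i => s i ^ k) : Summable fun i => q i ^ k :=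
  hsk.of_nonneg_of_le (fun i => rpow_nonneg (hq0 i) k) fun i => rpow_le_rpow (hq0 i) (hqs i) hk

lemma summable_negMulLog (hk : k < 1) (hq0 : ∀ i, 0 ≤ q i) (hq1 : ∀ i, q i ≤ 1)
    (hqk : Summable fun i => q i ^ k) : Summable fun i => negMulLog (q i) :=
  .of_nonneg_of_le (fun i => negMulLog_nonneg (hq0 i) (hq1 i))
    (fun i => negMulLog_le_rpow_div hk (hq0 i)) (hqk.div_const _)

lemma tsum_negMulLog_le (hk : k < 1) (hq0 : ∀ i, 0 ≤ q i) (hq1 : ∀ i, q i ≤ 1)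
    (hqk : Summable fun i => q i ^ k) :
    ∑' i, negMulLog (q i) ≤ (∑' i, q i ^ k) / (exp 1 * (1 - k)) := by
  rw [← tsum_div_const]
  exact (summable_negMulLog hk hq0 hq1 hqk).tsum_le_tsum
    (fun i => negMulLog_le_rpow_div hk (hq0 i)) (hqk.div_const _)

lemma abs_tsum_negMulLog_sub_truncPmf_le (hk0 : 0 < k) (hk1 : k < 1) (hq0 : ∀ i, 0 ≤ q i)
    (hq : HasSum q 1) (hqk : Summable fun i => q i ^ k) (M : ℕ) :
    |∑' i, negMulLog (q i) - ∑' i, negMulLog (truncPmf q M i)| ≤ truncErrorBound k M q := by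
  have hq1 := le_one_of_hasSum_one hq0 hq
  set T := ∑' j, q (j + M)
  have hT0 : 0 ≤ T := tsum_nonneg fun j => hq0 _
  have hδ0 : 0 ≤ T / M := by positivity
  have hhead : ∀ i ∈ range M, q i + T / M ≤ 1 := fun i hi => by
    have hqi : q i ≤ ∑ j ∈ range M, q j := single_le_sum (fun j _ => hq0 j) hi
    have hM : (1 : ℝ) ≤ M := by exact_mod_cast (mem_range.1 hi).trans_le' (Nat.zero_le i)
    linarith [div_le_self hT0 hM, tsum_nat_add_eq_one_sub hq M]
  have hhead_le : |∑ i ∈ range M, (negMulLog (q i) - negMulLog (q i + T / M))| ≤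
      (M : ℝ) ^ (1 - k) * T ^ k / (exp 1 * (1 - k)) :=
    calc _ ≤ ∑ i ∈ range M, |negMulLog (q i) - negMulLog (q i + T / M)| := abs_sum_le_sum_abs _ _
      _ ≤ ∑ _i ∈ range M, (T / M) ^ k / (exp 1 * (1 - k)) := sum_le_sum fun i hi =>
          abs_negMulLog_sub_negMulLog_add_le hk0 hk1 (hq0 i) hδ0 (hhead i hi)
      _ = _ := by
          rw [sum_const, card_range, nsmul_eq_mul, div_rpow hT0 (Nat.cast_nonneg M),
            rpow_sub' (Nat.cast_nonneg M) (by linarith : (1 : ℝ) - k ≠ 0), rpow_one]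
          ring
  have htail_le : |∑' i, negMulLog (q (i + M))| ≤ (∑' i, q (i + M) ^ k) / (exp 1 * (1 - k)) := by
    rw [abs_of_nonneg (tsum_nonneg fun i => negMulLog_nonneg (hq0 _) (hq1 _))]
    exact tsum_negMulLog_le hk1 (fun _ => hq0 _) (fun _ => hq1 _) ((summable_nat_add_iff M).2 hqk)
  rw [tsum_negMulLog_truncPmf, ← (summable_negMulLog hk1 hq0 hq1 hqk).sum_add_tsum_nat_add M,
    add_sub_right_comm, ← sum_sub_distrib]
  calc _ ≤ _ := abs_add_le _ _
    _ ≤ _ := add_le_add hhead_le htail_le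
    _ = truncErrorBound k M q := by rw [truncErrorBound, add_div]

lemma truncErrorBound_mono (hk0 : 0 < k) (hk1 : k < 1) (hq0 : ∀ i, 0 ≤ q i)
    (hqs : ∀ i, q i ≤ s i) (hs : Summable s) (hsk : Summable fun i => s i ^ k) (M : ℕ) :
    truncErrorBound k M q ≤ truncErrorBound k M s := by
  have hqk : ∀ i, q i ^ k ≤ s i ^ k := fun i => rpow_le_rpow (hq0 i) (hqs i) hk0.le
  have hT : ∑' i, q (i + M) ≤ ∑' i, s (i + M) :=
    Summable.tsum_le_tsum (fun _ => hqs _)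
      ((summable_nat_add_iff M).2 (hs.of_nonneg_of_le hq0 hqs)) ((summable_nat_add_iff M).2 hs)
  have hQ : ∑' i, q (i + M) ^ k ≤ ∑' i, s (i + M) ^ k :=
    Summable.tsum_le_tsum (fun _ => hqk _)
      ((summable_nat_add_iff M).2 (summable_rpow_of_le hk0.le hq0 hqs hsk))
      ((summable_nat_add_iff M).2 hsk)
  have hk' : 0 < 1 - k := by linarith
  unfold truncErrorBound
  gcongr
  exact tsum_nonneg fun _ => hq0 _

lemma abs_pmfEntropy2_sub_truncPmf_le (hk0 : 0 < k) (hk1 : k < 1) (hq0 : ∀ i, 0 ≤ q i)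
    (hq : HasSum q 1) (hqs : ∀ i, q i ≤ s i) (hs : Summable s) (hsk : Summable fun i => s i ^ k)
    (M : ℕ) :
    |pmfEntropy2 q - pmfEntropy2 (truncPmf q M)| ≤ logb 2 (exp 1) * truncErrorBound k M s := by
  have hqk := summable_rpow_of_le hk0.le hq0 hqs hsk
  have hc : 0 < logb 2 (exp 1) := logb_pos one_lt_two (one_lt_exp_iff.2 one_pos)
  rw [pmfEntropy2_eq_mul_tsum, pmfEntropy2_eq_mul_tsum, ← mul_sub, abs_mul, abs_of_pos hc]
  exact mul_le_mul_of_nonneg_left ((abs_tsum_negMulLog_sub_truncPmf_le hk0 hk1 hq0 hq hqk M).trans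
    (truncErrorBound_mono hk0 hk1 hq0 hqs hs hsk M)) hc.le

lemma abs_pmfEntropy2_le (hk0 : 0 < k) (hk1 : k < 1) (hq0 : ∀ i, 0 ≤ q i) (hq1 : ∀ i, q i ≤ 1)
    (hqs : ∀ i, q i ≤ s i) (hsk : Summable fun i => s i ^ k) :
    |pmfEntropy2 q| ≤ logb 2 (exp 1) * ((∑' i, s i ^ k) / (exp 1 * (1 - k))) := by
  have hc : 0 < logb 2 (exp 1) := logb_pos one_lt_two (one_lt_exp_iff.2 one_pos)
  have hqk : ∀ i, q i ^ k ≤ s i ^ k := fun i => rpow_le_rpow (hq0 i) (hqs i) hk0.le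
  have hqk' := summable_rpow_of_le hk0.le hq0 hqs hsk
  rw [pmfEntropy2_eq_mul_tsum, abs_mul, abs_of_pos hc,
    abs_of_nonneg (tsum_nonneg fun i => negMulLog_nonneg (hq0 i) (hq1 i))]
  refine mul_le_mul_of_nonneg_left ((tsum_negMulLog_le hk1 hq0 hq1 hqk').trans ?_) hc.le
  have hk' : 0 < 1 - k := by linarith
  exact div_le_div_of_nonneg_right (hqk'.tsum_le_tsum hqk hsk) (by positivity)

end Summation

lemma measurable_tsum_of_summable {𝕏 : Type*} [MeasurableSpace 𝕏] {f : ℕ → 𝕏 → ℝ}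
    (hf : ∀ i, Measurable (f i)) (hs : ∀ x, Summable fun i => f i x) :
    Measurable fun x => ∑' i, f i x :=
  measurable_of_tendsto_metrizable (fun _ => Finset.measurable_sum _ fun i _ => hf i)
    (tendsto_pi_nhds.2 fun x => (hs x).hasSum.tendsto_sum_nat)

lemma abs_integral_sub_integral_le {𝕏 : Type*} [MeasurableSpace 𝕏] {p : Measure 𝕏}
    [IsProbabilityMeasure p] {f g : 𝕏 → ℝ} (hf : Integrable f p) (hg : AEStronglyMeasurable g p)
    {B : ℝ} (hfg : ∀ x, |f x - g x| ≤ B) :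
    |∫ x, f x ∂p - ∫ x, g x ∂p| ≤ B := by
  have hfg' : Integrable (fun x => f x - g x) p :=
    .of_bound (hf.aestronglyMeasurable.sub hg) B (ae_of_all _ hfg)
  have hg' : Integrable g p := (hf.sub hfg').congr (ae_of_all _ fun x => by simp)
  rw [← integral_sub hf hg']
  simpa using norm_integral_le_of_norm_le_const (μ := p)
    (ae_of_all _ fun x => (Real.norm_eq_abs _).trans_le (hfg x))

section Channel

variable {𝕏 : Type*} [MeasurableSpace 𝕏] {p : Measure 𝕏} [IsProbabilityMeasure p]
  {W : 𝕏 → ℕ → ℝ}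

lemma integrable_channel (hWmeas : ∀ i, Measurable fun x => W x i) (hWnn : ∀ x i, 0 ≤ W x i)
    (hWsum : ∀ x, HasSum (W x) 1) (i : ℕ) : Integrable (fun x => W x i) p :=
  .of_bound (hWmeas i).aestronglyMeasurable 1 (ae_of_all _ fun x => by
    rw [Real.norm_of_nonneg (hWnn x i)]
    exact le_one_of_hasSum_one (hWnn x) (hWsum x) i)

lemma hasSum_integral_channel (hWmeas : ∀ i, Measurable fun x => W x i)
    (hWnn : ∀ x i, 0 ≤ W x i) (hWsum : ∀ x, HasSum (W x) 1) :
    HasSum (fun i => ∫ x, W x i ∂p) 1 := by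
  simpa using hasSum_integral_of_dominated_convergence (μ := p) (F := fun i x => W x i)
    (f := fun _ => 1) (fun i x => W x i) (fun i => (hWmeas i).aestronglyMeasurable)
    (fun i => ae_of_all _ fun x => (Real.norm_of_nonneg (hWnn x i)).le)
    (ae_of_all _ fun x => (hWsum x).summable)
    (by simp_rw [(hWsum _).tsum_eq]; exact integrable_const 1) (ae_of_all _ hWsum)

lemma integral_truncPmf (hWmeas : ∀ i, Measurable fun x => W x i) (hWnn : ∀ x i, 0 ≤ W x i)
    (hWsum : ∀ x, HasSum (W x) 1) (M : ℕ) :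
    (fun i => ∫ x, truncPmf (W x) M i ∂p) = truncPmf (fun i => ∫ x, W x i ∂p) M := by
  have hint := integrable_channel (p := p) hWmeas hWnn hWsum
  have hhead : Integrable (fun x => ∑ j ∈ range M, W x j) p :=
    integrable_finsetSum _ fun j _ => hint j
  funext i
  simp only [truncPmf, tsum_ite_le_eq_tsum_nat_add, tsum_nat_add_eq_one_sub (hWsum _),
    tsum_nat_add_eq_one_sub (hasSum_integral_channel (p := p) hWmeas hWnn hWsum)]
  split_ifs
  · have hrest : Integrable (fun x => 1 - ∑ j ∈ range M, W x j) p :=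
      (integrable_const 1).sub hhead
    rw [integral_add (hint i) (hrest.const_mul _), integral_const_mul,
      integral_sub (integrable_const 1) hhead, integral_finsetSum _ fun j _ => hint j]
    simp
  · simp

lemma abs_integral_pmfEntropy2_sub_truncChannel_le {k : ℝ} (hk0 : 0 < k) (hk1 : k < 1)
    (hWmeas : ∀ i, Measurable fun x => W x i) (hWnn : ∀ x i, 0 ≤ W x i)
    (hWsum : ∀ x, HasSum (W x) 1) {s : ℕ → ℝ} (hWs : ∀ x i, W x i ≤ s i) (hs : Summable s)
    (hsk : Summable fun i => s i ^ k) (M : ℕ) :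
    |∫ x, pmfEntropy2 (W x) ∂p - ∫ x, pmfEntropy2 (truncChannel W M x) ∂p| ≤
      logb 2 (exp 1) * truncErrorBound k M s := by
  have hW1 x := le_one_of_hasSum_one (hWnn x) (hWsum x)
  have hmeas : Measurable fun x => pmfEntropy2 (W x) := by
    simp_rw [pmfEntropy2_eq_mul_tsum]
    exact (measurable_tsum_of_summable (fun i => continuous_negMulLog.measurable.comp (hWmeas i))
      fun x => summable_negMulLog hk1 (hWnn x) (hW1 x)
        (summable_rpow_of_le hk0.le (hWnn x) (hWs x) hsk)).const_mul _
  have hmeas_trunc : Measurable fun x => pmfEntropy2 (truncChannel W M x) := by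
    simp_rw [truncChannel_apply, pmfEntropy2_eq_mul_tsum, tsum_negMulLog_truncPmf,
      tsum_nat_add_eq_one_sub (hWsum _)]
    fun_prop
  refine abs_integral_sub_integral_le
    (.of_bound hmeas.aestronglyMeasurable _ (ae_of_all _ fun x => (Real.norm_eq_abs _).trans_le
      (abs_pmfEntropy2_le hk0 hk1 (hWnn x) (hW1 x) (hWs x) hsk)))
    hmeas_trunc.aestronglyMeasurable fun x =>
      abs_pmfEntropy2_sub_truncPmf_le hk0 hk1 (hWnn x) (hWsum x) (hWs x) hs hsk M

lemma abs_mutualInfoCtble_sub_truncChannel_le {k : ℝ} (hk0 : 0 < k) (hk1 : k < 1)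
    (hWmeas : ∀ i, Measurable fun x => W x i) (hWnn : ∀ x i, 0 ≤ W x i)
    (hWsum : ∀ x, HasSum (W x) 1) {s : ℕ → ℝ} (hWs : ∀ x i, W x i ≤ s i) (hs : Summable s)
    (hsk : Summable fun i => s i ^ k) (M : ℕ) :
    |mutualInfoCtble p W - mutualInfoCtble p (truncChannel W M)| ≤
      2 * (logb 2 (exp 1) * truncErrorBound k M s) := by
  have hout := abs_pmfEntropy2_sub_truncPmf_le (q := fun i => ∫ x, W x i ∂p) hk0 hk1
    (fun i => integral_nonneg fun x => hWnn x i) (hasSum_integral_channel hWmeas hWnn hWsum)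
    (fun i => (integral_mono (integrable_channel hWmeas hWnn hWsum i) (integrable_const (s i))
      fun x => hWs x i).trans_eq (by simp)) hs hsk M
  rw [← integral_truncPmf hWmeas hWnn hWsum] at hout
  have hcond := abs_integral_pmfEntropy2_sub_truncChannel_le (p := p) hk0 hk1 hWmeas hWnn hWsum
    hWs hs hsk M
  rw [mutualInfoCtble, mutualInfoCtble, sub_sub_sub_comm, two_mul]
  exact (abs_sub _ _).trans (add_le_add hout hcond)

end Channel

theorem stmt13_general {𝕏 : Type*} [MeasurableSpace 𝕏]
    (W : 𝕏 → ℕ → ℝ)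
    (hWmeas : ∀ i, Measurable fun x => W x i)
    (hWnn : ∀ x i, 0 ≤ W x i)
    (hWsum : ∀ x, HasSum (W x) 1)
    (k : ℝ) (hk0 : 0 < k) (hk1 : k < 1)
    -- k-ordered polynomial tail: R_k(M) < ∞ for all M
    (htail : ∀ M : ℕ, Summable fun i : ℕ => if M ≤ i then (⨆ x, W x i) ^ k else 0)
    (M : ℕ)
    (p : Measure 𝕏) [IsProbabilityMeasure p] :
    |mutualInfoCtble p W - mutualInfoCtble p (truncChannel W M)| ≤
      2 * Real.logb 2 (Real.exp 1) / (Real.exp 1 * (1 - k)) *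
        ((M : ℝ) ^ (1 - k) * tailR W 1 M ^ k + tailR W k M) := by
  have hW1 x := le_one_of_hasSum_one (hWnn x) (hWsum x)
  set s : ℕ → ℝ := fun i => ⨆ x, W x i
  have hWs : ∀ x i, W x i ≤ s i := fun x i =>
    le_ciSup (f := fun x => W x i) ⟨1, by rintro _ ⟨y, rfl⟩; exact hW1 y i⟩ x
  have hs0 : ∀ i, 0 ≤ s i := fun i => Real.iSup_nonneg fun x => hWnn x i
  have hsk : Summable fun i => s i ^ k := by simpa using htail 0
  have hs : Summable s := hsk.of_nonneg_of_le hs0 fun i =>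
    self_le_rpow_of_le_one (hs0 i) (Real.iSup_le (fun x => hW1 x i) zero_le_one) hk1.le
  have hR (r : ℝ) : tailR W r M = ∑' i, s (i + M) ^ r := tsum_ite_le_eq_tsum_nat_add _ M
  refine (abs_mutualInfoCtble_sub_truncChannel_le hk0 hk1 hWmeas hWnn hWsum hWs hs hsk M).trans_eq
    ?_
  simp_rw [truncErrorBound, hR, rpow_one]
  ring

theorem stmt13 {𝕏 : Type*} [MeasurableSpace 𝕏] [Nonempty 𝕏]
    (W : 𝕏 → ℕ → ℝ)
    (hWmeas : ∀ i, Measurable fun x => W x i)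
    (hWnn : ∀ x i, 0 ≤ W x i)
    (hWsum : ∀ x, HasSum (W x) 1)
    (k : ℝ) (hk0 : 0 < k) (hk1 : k < 1)
    -- k-ordered polynomial tail: R_k(M) < ∞ for all M
    (htail : ∀ M : ℕ, Summable fun i : ℕ => if M ≤ i then (⨆ x, W x i) ^ k else 0)
    (M : ℕ) (hM : 0 < M)
    (p : Measure 𝕏) [IsProbabilityMeasure p] :
    |mutualInfoCtble p W - mutualInfoCtble p (truncChannel W M)| ≤
      2 * Real.logb 2 (Real.exp 1) / (Real.exp 1 * (1 - k)) *
        ((M : ℝ) ^ (1 - k) * tailR W 1 M ^ k + tailR W k M) :=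
  stmt13_general W hWmeas hWnn hWsum k hk0 hk1 htail M p
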